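/- The function φ₁₀(p,q) = (p³ − 3p)/(1 + p²)³·q⁴ + (3/2)·(p⁵ − 2p³ − 3p)/(1 + p²)³·q² − (3/2)·p/(1 + p²) satisfies the equation (1 + p²)φ_pp + 2pq·φ_pq + (1 + q²)φ_qq = 0 for all real p, q. -/

import Mathlib

/-!
Write `φ₁₀ = A(p) q⁴ + B(p) q² + C(p)`. The operator `(1 + p²) ∂ₚₚ + 2pq ∂ₚ∂_q + (1 + q²) ∂_qq`
maps such an even quartic in `q` to another one, with coefficients
`(1 + p²) A'' + 8p A' + 12 A`, `(1 + p²) B'' + 4p B' + 2B + 12 A` and `(1 + p²) C'' + 2B`.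
Since `A`, `B`, `C` are polynomials over powers of `1 + p²`, so are their derivatives, and the three
coefficients vanish by clearing denominators.
-/

open Polynomial

noncomputable def pd₁ (f : ℝ → ℝ → ℝ) : ℝ → ℝ → ℝ := fun p q => deriv (fun x => f x q) p
noncomputable def pd₂ (f : ℝ → ℝ → ℝ) : ℝ → ℝ → ℝ := fun p q => deriv (fun y => f p y) q

noncomputable def legendreOperator (φ : ℝ → ℝ → ℝ) (p q : ℝ) : ℝ :=
  (1 + p ^ 2) * pd₁ (pd₁ φ) p q + 2 * p * q * pd₁ (pd₂ φ) p q + (1 + q ^ 2) * pd₂ (pd₂ φ) p q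

theorem hasDerivAt_eval_div_one_add_sq_pow (P : ℝ[X]) (k : ℕ) (x : ℝ) :
    HasDerivAt (fun t => P.eval t / (1 + t ^ 2) ^ k)
      ((derivative P * (1 + X ^ 2) - 2 * (k : ℝ[X]) * X * P).eval x / (1 + x ^ 2) ^ (k + 1)) x := by
  have hden : HasDerivAt (fun t : ℝ => (1 + t ^ 2) ^ k) (k * (1 + x ^ 2) ^ (k - 1) * (2 * x)) x :=
    ((hasDerivAt_pow 2 x).const_add 1).pow k |>.congr_deriv (by ring)
  refine ((P.hasDerivAt x).fun_div hden (by positivity)).congr_deriv ?_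
  have hpos : 0 < 1 + x ^ 2 := by positivity
  rcases k with _ | k
  · simp only [pow_zero, CharP.cast_eq_zero, mul_zero, zero_mul, sub_zero, zero_add, pow_one,
      eval_mul, eval_add, eval_one, eval_pow, eval_X]
    field_simp
  · simp only [eval_sub, eval_mul, eval_add, eval_one, eval_pow, eval_X, eval_natCast,
      eval_ofNat, Nat.cast_add, Nat.cast_one, add_tsub_cancel_right]
    field_simp
    ring

section EvenQuartic

variable {f f' f'' g g' g'' h h' h'' : ℝ → ℝ}

theorem pd₁_evenQuartic (hf : ∀ x, HasDerivAt f (f' x) x) (hg : ∀ x, HasDerivAt g (g' x) x)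
    (hh : ∀ x, HasDerivAt h (h' x) x) :
    pd₁ (fun x y => f x * y ^ 4 + g x * y ^ 2 + h x) = fun x y => f' x * y ^ 4 + g' x * y ^ 2 + h' x :=
  funext₂ fun p q => ((((hf p).mul_const (q ^ 4)).add ((hg p).mul_const (q ^ 2))).add (hh p)).deriv

theorem pd₂_evenQuartic :
    pd₂ (fun x y => f x * y ^ 4 + g x * y ^ 2 + h x) = fun x y => 4 * f x * y ^ 3 + 2 * g x * y := by
  funext p q
  exact ((((hasDerivAt_pow 4 q).const_mul (f p)).add ((hasDerivAt_pow 2 q).const_mul (g p))).add_const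
    (c := h p)).deriv.trans (by push_cast; ring)

theorem pd₁_oddCubic (hf : ∀ x, HasDerivAt f (f' x) x) (hg : ∀ x, HasDerivAt g (g' x) x) :
    pd₁ (fun x y => f x * y ^ 3 + g x * y) = fun x y => f' x * y ^ 3 + g' x * y :=
  funext₂ fun p q => (((hf p).mul_const (q ^ 3)).add ((hg p).mul_const q)).deriv

theorem pd₂_oddCubic : pd₂ (fun x y => f x * y ^ 3 + g x * y) = fun x y => 3 * f x * y ^ 2 + g x := by
  funext p q
  exact (((hasDerivAt_pow 3 q).const_mul (f p)).add ((hasDerivAt_id q).const_mul (g p))).deriv.trans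
    (by push_cast; ring)

theorem legendreOperator_evenQuartic (hf : ∀ x, HasDerivAt f (f' x) x)
    (hf' : ∀ x, HasDerivAt f' (f'' x) x) (hg : ∀ x, HasDerivAt g (g' x) x)
    (hg' : ∀ x, HasDerivAt g' (g'' x) x) (hh : ∀ x, HasDerivAt h (h' x) x)
    (hh' : ∀ x, HasDerivAt h' (h'' x) x) (p q : ℝ) :
    legendreOperator (fun x y => f x * y ^ 4 + g x * y ^ 2 + h x) p q =
      ((1 + p ^ 2) * f'' p + 8 * p * f' p + 12 * f p) * q ^ 4
        + ((1 + p ^ 2) * g'' p + 4 * p * g' p + 2 * g p + 12 * f p) * q ^ 2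
        + ((1 + p ^ 2) * h'' p + 2 * g p) := by
  have h4f : ∀ x, HasDerivAt (fun a => 4 * f a) (4 * f' x) x := fun x => (hf x).const_mul 4
  have h2g : ∀ x, HasDerivAt (fun a => 2 * g a) (2 * g' x) x := fun x => (hg x).const_mul 2
  rw [legendreOperator, pd₁_evenQuartic hf hg hh, pd₁_evenQuartic hf' hg' hh', pd₂_evenQuartic,
    pd₁_oddCubic h4f h2g, pd₂_oddCubic]
  ring

end EvenQuartic

theorem phi_solves_legendre_eq :
    ∀ p q : ℝ,
      (1 + p ^ 2) * pd₁ (pd₁ (fun a b => (a ^ 3 - 3 * a) / (1 + a ^ 2) ^ 3 * b ^ 4 + (3 / 2) * ((a ^ 5 - 2 * a ^ 3 - 3 * a) / (1 + a ^ 2) ^ 3) * b ^ 2 - (3 / 2) * (a / (1 + a ^ 2)))) p q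
        + 2 * p * q * pd₁ (pd₂ (fun a b => (a ^ 3 - 3 * a) / (1 + a ^ 2) ^ 3 * b ^ 4 + (3 / 2) * ((a ^ 5 - 2 * a ^ 3 - 3 * a) / (1 + a ^ 2) ^ 3) * b ^ 2 - (3 / 2) * (a / (1 + a ^ 2)))) p q
        + (1 + q ^ 2) * pd₂ (pd₂ (fun a b => (a ^ 3 - 3 * a) / (1 + a ^ 2) ^ 3 * b ^ 4 + (3 / 2) * ((a ^ 5 - 2 * a ^ 3 - 3 * a) / (1 + a ^ 2) ^ 3) * b ^ 2 - (3 / 2) * (a / (1 + a ^ 2)))) p q = 0 := by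
  intro p q
  -- Writing each coefficient as `P / (1 + a²)ᵏ` with `P` a polynomial makes its derivatives
  -- computable by `simp`.
  have hφ : (fun a b : ℝ => (a ^ 3 - 3 * a) / (1 + a ^ 2) ^ 3 * b ^ 4
        + (3 / 2) * ((a ^ 5 - 2 * a ^ 3 - 3 * a) / (1 + a ^ 2) ^ 3) * b ^ 2 - (3 / 2) * (a / (1 + a ^ 2)))
      = fun a b => (X ^ 3 - 3 * X : ℝ[X]).eval a / (1 + a ^ 2) ^ 3 * b ^ 4
        + (C (3 / 2) * (X ^ 5 - 2 * X ^ 3 - 3 * X) : ℝ[X]).eval a / (1 + a ^ 2) ^ 3 * b ^ 2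
        + (C (-3 / 2) * X : ℝ[X]).eval a / (1 + a ^ 2) ^ 1 := by
    funext a b
    simp only [eval_sub, eval_mul, eval_pow, eval_X, eval_C, eval_ofNat]
    ring
  change legendreOperator _ p q = 0
  rw [hφ, legendreOperator_evenQuartic (hasDerivAt_eval_div_one_add_sq_pow _ 3)
    (hasDerivAt_eval_div_one_add_sq_pow _ _) (hasDerivAt_eval_div_one_add_sq_pow _ 3)
    (hasDerivAt_eval_div_one_add_sq_pow _ _) (hasDerivAt_eval_div_one_add_sq_pow _ 1)
    (hasDerivAt_eval_div_one_add_sq_pow _ _)]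
  have hpos : 0 < 1 + p ^ 2 := by positivity
  simp only [derivative_sub, derivative_mul, derivative_X_pow_succ, derivative_X,
    derivative_C, derivative_ofNat, derivative_one, map_add, map_one, Nat.cast_ofNat, Nat.cast_one,
    Nat.reduceAdd, zero_mul, mul_zero, mul_one, zero_add, add_zero, sub_zero, pow_one, eval_sub,
    eval_add, eval_mul, eval_pow, eval_X, eval_C, eval_one, eval_ofNat]
  field_simp
  ring
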